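/- arXiv:1908.02189 — 8 statements merged into one kernel-verified Lean document; each statement's English description precedes it below -/
import Mathlib

section
/- Let R be a ring and M an injective left R-module. If the countable direct sum M^(ℕ) is injective, then the direct sum M^(I) is injective for every index set I. -/
/-!
By Baer's criterion it suffices to extend a map `g : A → M^(I)` from a left ideal `A` to `R`.
The supports of the values of `g` lie in one finite set `S`: otherwise restrict `g` to countably
many coordinates of `S` and extend it to `R` through the injective module `M^(ℕ)`; the image `x`
of `1` satisfies `a • x = g a` on those coordinates, so `x` would be nonzero at each of them.
Hence `g` takes values in `M^(S) ≅ M^S`, a finite product of injective modules.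
-/

universe v w

theorem Module.Baer.finite_iUnion_support {R M I : Type*} [Ring R] [AddCommGroup M] [Module R M]
    (hM : Module.Baer R (ℕ →₀ M)) {A : Ideal R} (g : A →ₗ[R] I →₀ M) :
    (⋃ a, ((g a).support : Set I)).Finite := by
  rw [← Set.not_infinite]
  intro hinf
  let f := Set.Infinite.natEmbedding _ hinf
  let e : ℕ ↪ I := f.trans (Function.Embedding.subtype _)
  obtain ⟨h, hh⟩ := hM A (Finsupp.lcomapDomain e e.injective ∘ₗ g)
  refine Set.infinite_univ ((h 1).support.finite_toSet.subset fun n _ ↦ ?_)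
  obtain ⟨a, ha⟩ := Set.mem_iUnion.mp (f n).2
  have hx : (a : R) • h 1 n = g a (e n) := by
    rw [← Finsupp.smul_apply, ← map_smul, smul_eq_mul, mul_one, hh a a.2]
    rfl
  rw [Finset.mem_coe, Finsupp.mem_support_iff] at ha ⊢
  exact fun h0 ↦ ha (hx.symm.trans (by rw [h0, smul_zero]))

theorem Module.Baer.supported_of_finite {R : Type u} [Ring R] {M : Type v} [AddCommGroup M]
    [Module R M] [Small.{v} R] [Module.Injective R M] {I : Type w} (s : Set I) [Finite s] :
    Module.Baer R (Finsupp.supported M R s) :=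
  have : Small.{max v w} R := small_lift R
  .of_equiv ((Finsupp.supportedEquivFinsupp s).trans (Finsupp.linearEquivFunOnFinite R M s)).symm
    (.of_injective inferInstance)

/-- If `M` is injective and the countable direct sum `M^(ℕ)` is injective, then `M^(I)` is
injective for every index set `I`. -/
theorem sigma_injective_of_countable (R : Type u) [Ring R] (M : Type u)
    [AddCommGroup M] [Module R M]
    (hM : Module.Injective R M)
    (hcount : Module.Injective R (ℕ →₀ M)) :
    ∀ (I : Type u), Module.Injective R (I →₀ M) := by
  intro I
  refine Module.Baer.injective fun A g ↦ ?_
  set S := ⋃ a, ((g a).support : Set I)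
  have : Finite S := (Module.Baer.of_injective hcount).finite_iUnion_support g
  have hS (a : A) : g a ∈ Finsupp.supported M R S :=
    (Finsupp.mem_supported R (g a)).2 (Set.subset_iUnion (fun a ↦ ((g a).support : Set I)) a)
  obtain ⟨g', hg'⟩ := Module.Baer.supported_of_finite S A (g.codRestrict _ hS)
  exact ⟨(Finsupp.supported M R S).subtype ∘ₗ g', fun x hx ↦ by simp [hg' x hx]⟩
end

section
/- Let R be a ring. If M and N are injective left R-modules and there exist injective R-linear maps f : M → N and g : N → M, then M and N are isomorphic as R-modules. -/
/-!
Split `M = g(N) ⊕ C`. The injective endomorphism `u = g ∘ f` of `M` has range inside `g(N)`, so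
`D = ∑ₙ uⁿ(C)` decomposes as `D = C ⊕ u(D) ≅ C × D`. Let `E ≤ N` be an injective hull of `f(D)`,
with `N = E ⊕ F`. Then `C × E` is an injective hull of `C × f(D) ≅ C × D ≅ D ≅ f(D)`, and injective
hulls are unique, so `E ≅ C × E` and `M ≅ N × C ≅ E × F × C ≅ E × F ≅ N`.

Inside an injective module, a maximal essential extension of a submodule is an injective hull.
-/

universe u v

open Submodule LinearMap

variable {R : Type u} [Ring R]

namespace Submodule

variable {M : Type v} [AddCommGroup M] [Module R M]

/-- Every nonzero element of `q` has a nonzero multiple in `p`. For `p ≤ q` this says that `p` is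
essential in `q`, but `p ≤ q` is not required. -/
def IsEssentialIn (p q : Submodule R M) : Prop :=
  ∀ v ∈ q, v ≠ 0 → ∃ r : R, r • v ∈ p ∧ r • v ≠ 0

theorem IsEssentialIn.refl (p : Submodule R M) : p.IsEssentialIn p :=
  fun _ hv hv0 => ⟨1, by rwa [one_smul], by rwa [one_smul]⟩

theorem IsEssentialIn.trans {p q s : Submodule R M} (hpq : p.IsEssentialIn q)
    (hqs : q.IsEssentialIn s) : p.IsEssentialIn s := by
  intro v hv hv0
  obtain ⟨r, hrq, hr0⟩ := hqs v hv hv0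
  obtain ⟨t, htp, ht0⟩ := hpq _ hrq hr0
  exact ⟨t * r, by rwa [mul_smul], by rwa [mul_smul]⟩

theorem exists_maximal_isEssentialIn (D : Submodule R M) :
    ∃ E, D ≤ E ∧ Maximal D.IsEssentialIn E := by
  refine zorn_le_nonempty₀ _ (fun c hc hchain y hy => ⟨sSup c, ?_, fun _ => le_sSup⟩) D
    (IsEssentialIn.refl D)
  intro v hv hv0
  obtain ⟨B, hB, hvB⟩ := (mem_sSup_of_directed ⟨y, hy⟩ hchain.directedOn).mp hv
  exact hc hB v hvB hv0

theorem exists_maximal_disjoint (E : Submodule R M) : ∃ K, Maximal (Disjoint · E) K :=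
  zorn_le₀ _ fun c hc hchain =>
    ⟨sSup c, hchain.directedOn.disjoint_sSup_left.mpr fun _ hb => hc hb, fun _ => le_sSup⟩

theorem IsEssentialIn.prod {M' : Type*} [AddCommGroup M'] [Module R M'] {p₁ q₁ : Submodule R M}
    {p₂ q₂ : Submodule R M'} (h₁ : p₁.IsEssentialIn q₁) (h₂ : p₂.IsEssentialIn q₂) :
    (p₁.prod p₂).IsEssentialIn (q₁.prod q₂) := by
  rintro ⟨a, b⟩ ⟨ha, hb⟩ hab
  by_cases ha0 : a = 0
  · subst ha0
    obtain ⟨r, hrp, hr0⟩ := h₂ b hb fun hb0 => hab (by rw [hb0]; rfl)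
    exact ⟨r, ⟨by simp, hrp⟩, fun h => hr0 (congrArg Prod.snd h)⟩
  obtain ⟨r, hrp, hr0⟩ := h₁ a ha ha0
  by_cases hrb : r • b = 0
  · exact ⟨r, ⟨hrp, by simp [hrb]⟩, fun h => hr0 (congrArg Prod.fst h)⟩
  obtain ⟨s, hsp, hs0⟩ := h₂ _ (q₂.smul_mem r hb) hrb
  exact ⟨s * r, ⟨by rw [Prod.smul_fst, mul_smul]; exact p₁.smul_mem s hrp, by
    rwa [Prod.smul_snd, mul_smul]⟩, fun h => hs0 (by simpa [mul_smul] using congrArg Prod.snd h)⟩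

theorem isEssentialIn_top_range_codRestrict {X : Type*} [AddCommGroup X] [Module R X]
    {k : X →ₗ[R] M} {E : Submodule R M} (hk : ∀ x, k x ∈ E) (hess : (range k).IsEssentialIn E) :
    (range (k.codRestrict E hk)).IsEssentialIn ⊤ := by
  rintro ⟨v, hv⟩ - hv0
  obtain ⟨r, ⟨x, hx⟩, hr0⟩ := hess v hv fun h => hv0 (Subtype.ext h)
  exact ⟨r, ⟨x, Subtype.ext hx⟩, fun h => hr0 (congrArg Subtype.val h)⟩

theorem sup_map_iSup_map_pow (u : M →ₗ[R] M) (C : Submodule R M) :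
    C ⊔ (⨆ n : ℕ, C.map (u ^ n)).map u = ⨆ n : ℕ, C.map (u ^ n) := by
  conv_rhs => rw [← sup_iSup_nat_succ]
  simp only [Submodule.map_iSup, pow_zero, pow_succ', Module.End.one_eq_id,
    Module.End.mul_eq_comp, map_id, map_comp]

/-- `(c, d) ↦ c + u d`, exhibiting `D` as the internal direct sum `C ⊕ u(D)`. -/
noncomputable def prodEquivOfSupMapEq {u : M →ₗ[R] M} (hu : Function.Injective u)
    {C D : Submodule R M} (hC : Disjoint C (range u)) (hD : C ⊔ D.map u = D) : (C × D) ≃ₗ[R] D :=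
  have hinj : Function.Injective (C.subtype.coprod (u ∘ₗ D.subtype)) := by
    rw [injective_iff_map_eq_zero]
    rintro ⟨c, d⟩ h
    replace h : (c : M) + u d = 0 := h
    have hc : (c : M) = 0 := disjoint_def.1 hC _ c.2
      (by rw [eq_neg_of_add_eq_zero_left h]; exact neg_mem (mem_range_self u d))
    have hd : (d : M) = 0 := hu (by rw [map_zero, ← h, hc, zero_add])
    exact Prod.ext (Subtype.ext hc) (Subtype.ext hd)
  have hrange : range (C.subtype.coprod (u ∘ₗ D.subtype)) = D := by
    rw [range_coprod, range_comp, range_subtype, range_subtype, hD]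
  LinearEquiv.ofInjective _ hinj ≪≫ₗ LinearEquiv.ofEq _ _ hrange

end Submodule

namespace Module.Injective

variable {P Q : Type v} [AddCommGroup P] [Module R P] [AddCommGroup Q] [Module R Q]

theorem of_retract [Module.Injective R Q] (i : P →ₗ[R] Q) (r : Q →ₗ[R] P)
    (hri : ∀ x, r (i x) = x) : Module.Injective R P :=
  ⟨fun _ _ _ _ _ _ j hj φ => by
    obtain ⟨h, hh⟩ := Module.Injective.out j hj (i ∘ₗ φ)
    exact ⟨r ∘ₗ h, fun x => by rw [comp_apply, hh, comp_apply, hri]⟩⟩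

theorem of_linearEquiv [Module.Injective R Q] (e : Q ≃ₗ[R] P) : Module.Injective R P :=
  of_retract e.symm.toLinearMap e.toLinearMap e.apply_symm_apply

instance prod [Module.Injective R P] [Module.Injective R Q] : Module.Injective R (P × Q) :=
  ⟨fun _ _ _ _ _ _ j hj φ => by
    obtain ⟨h₁, hh₁⟩ := Module.Injective.out j hj (fst R P Q ∘ₗ φ)
    obtain ⟨h₂, hh₂⟩ := Module.Injective.out j hj (snd R P Q ∘ₗ φ)
    exact ⟨h₁.prod h₂, fun x => Prod.ext (hh₁ x) (hh₂ x)⟩⟩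

end Module.Injective

namespace Submodule

variable {Q : Type v} [AddCommGroup Q] [Module R Q]

theorem exists_isCompl_of_injective (P : Submodule R Q) [Module.Injective R P] :
    ∃ C, IsCompl P C := by
  obtain ⟨r, hr⟩ := Module.Injective.out P.subtype P.injective_subtype LinearMap.id
  exact ⟨ker r, isCompl_of_proj hr⟩

theorem eq_top_of_injective_of_isEssentialIn_top {P p : Submodule R Q} [Module.Injective R P]
    (hpP : p ≤ P) (hp : p.IsEssentialIn ⊤) : P = ⊤ := by
  obtain ⟨C, hC⟩ := P.exists_isCompl_of_injective
  have hC0 : C = ⊥ := by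
    refine eq_bot_iff.2 fun v hv => (mem_bot R).2 (by_contra fun hv0 => ?_)
    obtain ⟨r, hrp, hr0⟩ := hp v trivial hv0
    exact hr0 (disjoint_def.1 hC.disjoint _ (hpP hrp) (C.smul_mem r hv))
  simpa [hC0] using hC.sup_eq_top

/-- Extend the embedding `E ↪ Q ⧸ K` to `ψ : Q ⧸ K → Q` and take `π = ψ ∘ mkQ`. If `π q ≠ 0`
then `q ∉ K`, so by maximality some `0 ≠ e = k + r • q` lies in `E`, and then `r • π q = π e = e`. -/
theorem exists_eqOn_isEssentialIn_range [Module.Injective R Q] {E K : Submodule R Q}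
    (hK : Maximal (Disjoint · E) K) :
    ∃ π : Q →ₗ[R] Q, (∀ e ∈ E, π e = e) ∧ E.IsEssentialIn (range π) := by
  have hinj : Function.Injective (K.mkQ ∘ₗ E.subtype) := by
    rw [injective_iff_map_eq_zero]
    rintro ⟨x, hxE⟩ hx
    exact Subtype.ext (disjoint_def.1 hK.prop x ((Quotient.mk_eq_zero K).1 hx) hxE)
  obtain ⟨ψ, hψ⟩ := Module.Injective.out _ hinj E.subtype
  have hψK : ∀ k ∈ K, ψ (K.mkQ k) = 0 := fun k hk => by
    rw [mkQ_apply, (Quotient.mk_eq_zero K).2 hk, map_zero]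
  refine ⟨ψ ∘ₗ K.mkQ, fun e he => hψ ⟨e, he⟩, ?_⟩
  rintro _ ⟨q, rfl⟩ hq0
  have hqK : q ∉ K := fun hq => hq0 (hψK q hq)
  obtain ⟨e, hesup, heE, he0⟩ : ∃ e ∈ K ⊔ span R {q}, e ∈ E ∧ e ≠ 0 := by
    simpa [disjoint_def] using hK.not_prop_of_gt (lt_sup_iff_notMem.2 hqK)
  obtain ⟨k, hk, _, hr, rfl⟩ := mem_sup.1 hesup
  obtain ⟨r, rfl⟩ := mem_span_singleton.1 hr
  have hre : r • (ψ ∘ₗ K.mkQ) q = k + r • q :=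
    calc r • (ψ ∘ₗ K.mkQ) q = ψ (K.mkQ k) + ψ (K.mkQ (r • q)) := by
          rw [hψK k hk, zero_add, comp_apply, map_smul, map_smul]
      _ = k + r • q := by rw [← map_add, ← map_add]; exact hψ ⟨_, heE⟩
  exact ⟨r, hre ▸ heE, hre ▸ he0⟩

theorem exists_injective_isEssentialIn [Module.Injective R Q] (D : Submodule R Q) :
    ∃ E : Submodule R Q, D ≤ E ∧ D.IsEssentialIn E ∧ Module.Injective R E := by
  obtain ⟨E, hDE, hE⟩ := D.exists_maximal_isEssentialIn
  obtain ⟨K, hK⟩ := E.exists_maximal_disjoint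
  obtain ⟨π, hπ, hπess⟩ := exists_eqOn_isEssentialIn_range hK
  have hπE : range π ≤ E := hE.le_of_ge (hE.prop.trans hπess) fun e he => ⟨e, hπ e he⟩
  exact ⟨E, hDE, hE.prop, .of_retract E.subtype (π.codRestrict E fun q => hπE ⟨q, rfl⟩)
    fun e => Subtype.ext (hπ e e.2)⟩

end Submodule

theorem nonempty_linearEquiv_of_isEssentialIn_range {X V W : Type v} [AddCommGroup X] [Module R X]
    [AddCommGroup V] [Module R V] [AddCommGroup W] [Module R W] [Module.Injective R V]
    [Module.Injective R W] {i : X →ₗ[R] V} {j : X →ₗ[R] W} (hi : Function.Injective i)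
    (hj : Function.Injective j) (hiess : (range i).IsEssentialIn ⊤)
    (hjess : (range j).IsEssentialIn ⊤) : Nonempty (V ≃ₗ[R] W) := by
  obtain ⟨h, hh⟩ := Module.Injective.out i hi j
  have hinj : Function.Injective h := by
    rw [injective_iff_map_eq_zero]
    intro v hv
    by_contra hv0
    obtain ⟨r, ⟨x, hx⟩, hr0⟩ := hiess v trivial hv0
    have hjx : j x = 0 := by rw [← hh, hx, map_smul, hv, smul_zero]
    exact hr0 (by rw [← hx, (injective_iff_map_eq_zero j).1 hj x hjx, map_zero])
  have : Module.Injective R (range h) := .of_linearEquiv (LinearEquiv.ofInjective h hinj)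
  have hsurj : range h = ⊤ :=
    eq_top_of_injective_of_isEssentialIn_top (by rintro _ ⟨x, rfl⟩; exact ⟨i x, hh x⟩) hjess
  exact ⟨.ofBijective h ⟨hinj, range_eq_top.1 hsurj⟩⟩

def LinearEquiv.prodAbsorb {C E F N : Type*} [AddCommGroup C] [Module R C] [AddCommGroup E]
    [Module R E] [AddCommGroup F] [Module R F] [AddCommGroup N] [Module R N]
    (eN : N ≃ₗ[R] E × F) (eE : (C × E) ≃ₗ[R] E) : (N × C) ≃ₗ[R] N :=
  eN.prodCongr (.refl R C) ≪≫ₗ .prodComm R _ C ≪≫ₗ (LinearEquiv.prodAssoc R C E F).symm ≪≫ₗ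
    eE.prodCongr (.refl R F) ≪≫ₗ eN.symm

/-- Bumby's theorem: two injective modules that embed into each other are isomorphic. -/
theorem bumby (R : Type u) [Ring R] (M N : Type u)
    [AddCommGroup M] [Module R M] [AddCommGroup N] [Module R N]
    (hM : Module.Injective R M) (hN : Module.Injective R N)
    (f : M →ₗ[R] N) (hf : Function.Injective f)
    (g : N →ₗ[R] M) (hg : Function.Injective g) :
    Nonempty (M ≃ₗ[R] N) := by
  have : Module.Injective R (range g) := .of_linearEquiv (LinearEquiv.ofInjective g hg)
  obtain ⟨C, hC⟩ := (range g).exists_isCompl_of_injective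
  have : Module.Injective R C :=
    .of_retract C.subtype (projectionOnto C _ hC.symm) (projectionOnto_apply_left hC.symm)
  set u := g ∘ₗ f
  set D := ⨆ n : ℕ, C.map (u ^ n)
  let eD : (C × D) ≃ₗ[R] D := prodEquivOfSupMapEq (hg.comp hf)
    (hC.symm.disjoint.mono_right (range_comp_le_range f g)) (sup_map_iSup_map_pow u C)
  let k := f ∘ₗ D.subtype
  obtain ⟨E, hkE, hkess, hE⟩ := (range k).exists_injective_isEssentialIn
  obtain ⟨F, hEF⟩ := E.exists_isCompl_of_injective
  let i := k.codRestrict E fun x => hkE ⟨x, rfl⟩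
  have hi : Function.Injective i := fun _ _ h => Subtype.ext (hf (congrArg Subtype.val h))
  have hiess : (range i).IsEssentialIn ⊤ := isEssentialIn_top_range_codRestrict _ hkess
  let j : D →ₗ[R] C × E := LinearMap.id.prodMap i ∘ₗ eD.symm.toLinearMap
  have hjess : (range j).IsEssentialIn ⊤ := by
    rw [range_comp_of_range_eq_top _ eD.symm.range, range_prodMap, range_id, ← prod_top]
    exact (IsEssentialIn.refl ⊤).prod hiess
  obtain ⟨eE⟩ := nonempty_linearEquiv_of_isEssentialIn_range hi
    ((Function.injective_id.prodMap hi).comp eD.symm.injective) hiess hjess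
  exact ⟨(prodEquivOfIsCompl _ _ hC).symm ≪≫ₗ
    (LinearEquiv.ofInjective g hg).symm.prodCongr (.refl R C) ≪≫ₗ
    LinearEquiv.prodAbsorb (prodEquivOfIsCompl E F hEF).symm eE.symm⟩
end

section
/- Let R be a ring. R is left noetherian if and only if every direct sum of injective left R-modules is injective. -/
universe u

/-! If `R` is noetherian, every ideal `J` is finitely generated, so a map `J → ⨁ Mᵢ` lands in
finitely many summands and Baer's criterion can be checked summand by summand. Conversely, for an
ascending chain of ideals `Iₙ` with union `J`, embed each `R ⧸ Iₙ` into an injective `Eₙ`. The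
reductions `x ↦ (x mod Iₙ)ₙ` map `J` into `⨁ Eₙ`; an extension to `R` is `x ↦ x • v` for a `v`
of finite support, so `J ⊆ I_N` for every `N` outside that support. -/

open LinearMap

section

variable {R : Type*} [Ring R] {ι : Type*} {M : ι → Type*}
  [∀ i, AddCommGroup (M i)] [∀ i, Module R (M i)] {N : Type*} [AddCommGroup N] [Module R N]

noncomputable def LinearMap.dfinsuppCodRestrict (f : N →ₗ[R] ∀ i, M i)
    (hf : ∀ x, {i | f x i ≠ 0}.Finite) : N →ₗ[R] Π₀ i, M i where
  toFun x := ⟨f x, Trunc.mk ⟨(hf x).toFinset.val, fun i => by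
    by_cases h : f x i = 0 <;> simp [h]⟩⟩
  map_add' x y := DFinsupp.ext fun i => congr_fun (map_add f x y) i
  map_smul' r x := DFinsupp.ext fun i => congr_fun (map_smul f r x) i

theorem LinearMap.exists_finset_apply_eq_zero [Module.Finite R N] (g : N →ₗ[R] Π₀ i, M i) :
    ∃ T : Finset ι, ∀ x, ∀ i ∉ T, g x i = 0 := by
  classical
  obtain ⟨s, hs⟩ := Module.Finite.fg_top (R := R) (M := N)
  refine ⟨s.biUnion fun x => (g x).support, fun x i hi => ?_⟩
  have hx : x ∈ Submodule.span R (s : Set N) := hs ▸ Submodule.mem_top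
  induction hx using Submodule.span_induction with
  | mem y hy =>
    exact DFinsupp.notMem_support_iff.mp fun h => hi (Finset.mem_biUnion.mpr ⟨y, hy, h⟩)
  | zero => simp
  | add y z _ _ hy hz => simp [hy, hz]
  | smul r y _ hy => simp [hy]

theorem Module.Baer.dfinsupp [IsNoetherianRing R] (hM : ∀ i, Module.Baer R (M i)) :
    Module.Baer R (Π₀ i, M i) := by
  classical
  intro J g
  obtain ⟨T, hT⟩ := g.exists_finset_apply_eq_zero
  choose G hG using fun i => hM i J (DFinsupp.lapply i ∘ₗ g)
  refine ⟨∑ i ∈ T, DFinsupp.lsingle i ∘ₗ G i, fun x hx => DFinsupp.ext fun j => ?_⟩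
  by_cases hj : j ∈ T
  · simp [DFinsupp.finsetSum_apply, DFinsupp.single_apply, hj, hG j x hx]
  · simp [DFinsupp.finsetSum_apply, DFinsupp.single_apply, hj, hT]

theorem Module.Baer.exists_finset_le_ker (hM : Module.Baer R (Π₀ i, M i))
    (f : ∀ i, R →ₗ[R] M i) {J : Ideal R}
    (hJ : ∀ x ∈ J, {i | f i x ≠ 0}.Finite) :
    ∃ T : Finset ι, ∀ i ∉ T, J ≤ ker (f i) := by
  classical
  obtain ⟨G, hG⟩ := hM J ((pi f ∘ₗ J.subtype).dfinsuppCodRestrict fun x => hJ x x.2)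
  refine ⟨(G 1).support, fun i hi x hx => ?_⟩
  calc f i x = G x i := by rw [hG x hx]; rfl
    _ = x • G 1 i := by rw [← DFinsupp.smul_apply, ← map_smul, smul_eq_mul, mul_one]
    _ = 0 := by rw [DFinsupp.notMem_support_iff.mp hi, smul_zero]

end

open CategoryTheory in
theorem Module.exists_embedding_into_injective {R : Type u} [Ring R] (Q : Type u)
    [AddCommGroup Q] [Module R Q] :
    ∃ (E : Type u) (_ : AddCommGroup E) (_ : Module R E) (f : Q →ₗ[R] E),
      Module.Injective R E ∧ Function.Injective f :=
  ⟨_, _, _, (Injective.ι (ModuleCat.of R Q)).hom,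
    Module.injective_module_of_injective_object (inj := Injective.injective_under _) R _,
    (ModuleCat.mono_iff_injective _).mp (Injective.ι_mono _)⟩

theorem isNoetherianRing_of_forall_injective_dfinsupp (R : Type u) [Ring R]
    (H : ∀ (I : Type u) (M : I → Type u) [∀ i, AddCommGroup (M i)] [∀ i, Module R (M i)],
      (∀ i, Module.Injective R (M i)) → Module.Injective R (Π₀ i, M i)) :
    IsNoetherianRing R := by
  rw [isNoetherianRing_iff, ← monotone_stabilizes_iff_noetherian]
  intro c
  choose E _ _ e hE he using fun n : ULift.{u} ℕ =>
    Module.exists_embedding_into_injective (R := R) (R ⧸ c n.down)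
  let f n := e n ∘ₗ (c n.down).mkQ
  have hker : ∀ n, ker (f n) = c n.down := fun n => by
    rw [ker_comp_of_ker_eq_bot _ (ker_eq_bot.mpr (he n)), Submodule.ker_mkQ]
  have hfin : ∀ x ∈ ⨆ n, c n, {n | f n x ≠ 0}.Finite := fun x hx => by
    obtain ⟨N, hN⟩ := (Submodule.mem_iSup_of_chain c x).mp hx
    refine ((Set.finite_Iio N).preimage ULift.down_injective.injOn).subset fun n hn => ?_
    by_contra hle
    exact hn (by simpa [← hker n] using c.monotone (not_lt.mp hle) hN)
  obtain ⟨T, hT⟩ := (Module.Baer.of_injective (H _ E hE)).exists_finset_le_ker f hfin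
  obtain ⟨N, hN⟩ := Infinite.exists_notMem_finset T
  refine ⟨N.down, fun m hm => le_antisymm (c.monotone hm) ?_⟩
  calc c m ≤ ⨆ n, c n := le_iSup c m
    _ ≤ c N.down := hker N ▸ hT N hN

/-- Cartan–Eilenberg–Bass–Papp: a ring is left noetherian iff every direct sum of
injective left modules is injective. -/
theorem noetherian_iff_directSum_injective (R : Type u) [Ring R] :
    IsNoetherianRing R ↔
      ∀ (I : Type u) (M : I → Type u) [∀ i, AddCommGroup (M i)] [∀ i, Module R (M i)],
        (∀ i, Module.Injective R (M i)) → Module.Injective R (Π₀ i, M i) :=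
  ⟨fun _ _ _ _ _ hM => (Module.Baer.dfinsupp fun i => Module.Baer.of_injective (hM i)).injective,
    isNoetherianRing_of_forall_injective_dfinsupp R⟩
end

section
/- Let R be a ring. R is left noetherian if and only if every absolutely pure left R-module is injective. -/
/-!
Over a left noetherian ring every left ideal `I` is finitely generated, so a map `I → M` is
determined by finitely many values; extending it into an injective module containing `M`
produces a finite linear system, which absolute purity lets us solve in `M` itself; Baer's
criterion then makes `M` injective.

Conversely, a direct sum of injective modules is always absolutely pure: a finite system only
involves finitely many coordinates, and each coordinate is solved by extending the projection.
Given an ascending chain `f n` of left ideals, embed each `R ⧸ f n` into an injective `E n`.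
The direct sum `⨁ E n` is then injective, so the map `⋃ f n → ⨁ E n`, `a ↦ (ā)ₙ`, is `a ↦ a • e`
for a single `e`; a coordinate `n` where `e` vanishes gives `f m ⊆ f n` for every `m ≥ n`.
-/

universe u v

open CategoryTheory DirectSum

namespace Module

variable (R : Type u) [Ring R]

def IsAbsolutelyPure (M : Type v) [AddCommGroup M] [Module R M] : Prop :=
  ∀ (N : Type v) [AddCommGroup N] [Module R N] (f : M →ₗ[R] N),
    Function.Injective f →
    ∀ (m k : ℕ) (a : Fin m → Fin k → R) (b : Fin m → M),
      (∃ x : Fin k → N, ∀ i, ∑ j, a i j • x j = f (b i)) →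
      (∃ x : Fin k → M, ∀ i, ∑ j, a i j • x j = b i)

theorem exists_injective_embedding [Small.{v} R] (M : Type v) [AddCommGroup M] [Module R M] :
    ∃ E : ModuleCat.{v} R, Module.Injective R E ∧ ∃ ι : M →ₗ[R] E, Function.Injective ι :=
  ⟨Injective.under (ModuleCat.of R M),
    injective_module_of_injective_object R _
      (inj := inferInstanceAs (CategoryTheory.Injective (Injective.under _))),
    (Injective.ι (ModuleCat.of R M)).hom,
    (ModuleCat.mono_iff_injective _).mp inferInstance⟩

variable {R}

theorem isAbsolutelyPure_directSum [Small.{v} R] {ι : Type*} [DecidableEq ι] (E : ι → Type v)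
    [∀ i, AddCommGroup (E i)] [∀ i, Module R (E i)] [∀ i, Module.Injective R (E i)] :
    IsAbsolutelyPure R (⨁ i, E i) := by
  classical
  intro N _ _ g hg m k a b ⟨x, hx⟩
  choose π hπ using fun i =>
    Module.Injective.extension_property R (E i) _ _ g hg (component R ι E i)
  let S := Finset.univ.biUnion fun i => (b i).support
  refine ⟨fun j => DirectSum.mk E S fun t => π t (x j), fun i => DirectSum.ext_iff.mpr fun t => ?_⟩
  simp only [DirectSum.sum_apply, DirectSum.smul_apply]
  by_cases ht : t ∈ S
  · simp only [DirectSum.mk_apply_of_mem ht, ← map_smul, ← map_sum, hx, ← LinearMap.comp_apply,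
      hπ]
    rfl
  · have hbt : b i t = 0 := DFinsupp.notMem_support_iff.mp fun hmem =>
      ht (Finset.mem_biUnion.mpr ⟨i, Finset.mem_univ i, hmem⟩)
    simp only [DirectSum.mk_apply_of_notMem ht, smul_zero, Finset.sum_const_zero, hbt]

theorem IsAbsolutelyPure.exists_extension_of_fg [Small.{v} R] {M : Type v} [AddCommGroup M]
    [Module R M] (hM : IsAbsolutelyPure R M) {I : Ideal R} (hI : I.FG) (g : I →ₗ[R] M) :
    ∃ g' : R →ₗ[R] M, ∀ (x : R) (mem : x ∈ I), g' x = g ⟨x, mem⟩ := by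
  obtain ⟨n, v, rfl⟩ := Submodule.fg_iff_exists_fin_generating_family.mp hI
  have hv : ∀ i, v i ∈ Submodule.span R (Set.range v) := fun i => Submodule.subset_span ⟨i, rfl⟩
  obtain ⟨E, hE, ι, hι⟩ := exists_injective_embedding R M
  obtain ⟨ψ, hψ⟩ := Module.Injective.extension_property R E _ _ (Submodule.subtype _)
    Subtype.val_injective (ι ∘ₗ g)
  have hψv : ∀ i, v i • ψ 1 = ι (g ⟨v i, hv i⟩) := fun i => by
    rw [← map_smul, smul_eq_mul, mul_one]
    exact LinearMap.congr_fun hψ ⟨v i, hv i⟩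
  obtain ⟨x, hx⟩ := hM E ι hι n 1 (fun i _ => v i) (fun i => g ⟨v i, hv i⟩)
    ⟨fun _ => ψ 1, by simpa using hψv⟩
  refine ⟨LinearMap.toSpanSingleton R M (x 0), fun r hr => ?_⟩
  rw [LinearMap.toSpanSingleton_apply]
  induction hr using Submodule.span_induction with
  | mem r hr =>
    obtain ⟨i, rfl⟩ := hr
    simpa using hx i
  | zero => rw [zero_smul, ← map_zero g]; rfl
  | add r s hr hs ihr ihs => rw [add_smul, ihr, ihs, ← map_add]; rfl
  | smul r s hs ih => rw [smul_assoc, ih, ← map_smul]; rfl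

theorem IsAbsolutelyPure.injective [Small.{v} R] [IsNoetherianRing R] {M : Type v}
    [AddCommGroup M] [Module R M] (hM : IsAbsolutelyPure R M) : Module.Injective R M :=
  Module.Baer.injective fun I => hM.exists_extension_of_fg (IsNoetherian.noetherian I)

end Module

namespace Ideal

variable {R : Type u} [Ring R] (f : ℕ →o Ideal R) {E : ℕ → Type v} [∀ n, AddCommGroup (E n)]
  [∀ n, Module R (E n)] (ι : ∀ n, (R ⧸ f n) →ₗ[R] E n)

/-- `a ↦ (ι n ā)ₙ`; it is finitely supported because `a ∈ f m` kills every coordinate `n ≥ m`. -/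
noncomputable def iSupToDirectSum : ↥(⨆ n, f n) →ₗ[R] ⨁ n, E n where
  toFun a := ⟨fun n => ι n (Submodule.Quotient.mk a), Trunc.mk
    ⟨Multiset.range ((Submodule.mem_iSup_of_chain f _).mp a.2).choose, fun n => by
      refine or_iff_not_imp_left.mpr fun hn => ?_
      rw [(Submodule.Quotient.mk_eq_zero _).mpr
        (f.monotone (not_lt.mp (Multiset.mem_range.not.mp hn))
          ((Submodule.mem_iSup_of_chain f _).mp a.2).choose_spec), map_zero]⟩⟩
  map_add' a b := DFinsupp.ext fun n => by
    change ι n (Submodule.Quotient.mk (a + b : R)) = ι n _ + ι n _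
    rw [Submodule.Quotient.mk_add, map_add]
  map_smul' r a := DFinsupp.ext fun n => by
    change ι n (Submodule.Quotient.mk (r • a : R)) = r • ι n _
    rw [Submodule.Quotient.mk_smul, map_smul]

theorem iSupToDirectSum_apply (a : ↥(⨆ n, f n)) (n : ℕ) :
    iSupToDirectSum f ι a n = ι n (Submodule.Quotient.mk a) := rfl

theorem stabilizes_of_injective_directSum [Small.{v} R] (hι : ∀ n, Function.Injective (ι n))
    [Module.Injective R (⨁ n, E n)] : ∃ n, ∀ m, n ≤ m → f n = f m := by
  classical
  obtain ⟨ψ, hψ⟩ := Module.Injective.extension_property R (⨁ n, E n) _ _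
    (Submodule.subtype _) Subtype.val_injective (iSupToDirectSum f ι)
  obtain ⟨n, hn⟩ := Infinite.exists_notMem_finset (ψ 1).support
  refine ⟨n, fun m hm => le_antisymm (f.monotone hm) fun a ha => ?_⟩
  have haI : a ∈ ⨆ n, f n := le_iSup f m ha
  have : iSupToDirectSum f ι ⟨a, haI⟩ n = 0 := by
    rw [← LinearMap.congr_fun hψ ⟨a, haI⟩]
    change ψ a n = 0
    rw [← mul_one a, ← smul_eq_mul, map_smul, DirectSum.smul_apply,
      DFinsupp.notMem_support_iff.mp hn, smul_zero]
  rw [iSupToDirectSum_apply] at this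
  exact (Submodule.Quotient.mk_eq_zero _).mp ((map_eq_zero_iff _ (hι n)).mp this)

end Ideal

/-- A ring is left noetherian iff every absolutely pure left module is injective. -/
theorem noetherian_iff_absolutelyPure_injective (R : Type u) [Ring R] :
    IsNoetherianRing R ↔
      ∀ (M : Type u) [AddCommGroup M] [Module R M],
        (∀ (N : Type u) [AddCommGroup N] [Module R N] (f : M →ₗ[R] N),
          Function.Injective f →
          ∀ (m k : ℕ) (a : Fin m → Fin k → R) (b : Fin m → M),
            (∃ x : Fin k → N, ∀ i, ∑ j, a i j • x j = f (b i)) →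
            (∃ x : Fin k → M, ∀ i, ∑ j, a i j • x j = b i)) →
        Module.Injective R M := by
  refine ⟨fun _ M _ _ hM => Module.IsAbsolutelyPure.injective hM, fun H => ?_⟩
  rw [isNoetherianRing_iff, ← monotone_stabilizes_iff_noetherian]
  intro f
  choose E hE ι hι using fun n => Module.exists_injective_embedding R (R ⧸ f n)
  have := H _ (Module.isAbsolutelyPure_directSum fun n => E n)
  exact Ideal.stabilizes_of_injective_directSum f ι hι
end

section
/- Let R be a left noetherian ring and {M_i : i ∈ I} a directed system of injective left R-modules with injective transition maps (e.g., an increasing chain of injective submodules of a fixed module). Then the union (direct limit) of the M_i is injective. -/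
/-!
Baer's criterion reduces injectivity of `lim G i` to extending maps `g : I → lim G i` from left
ideals `I`. Over a left noetherian ring `I` is finitely generated, so the image of `g` lies in a
single stage `G i`, which embeds in the limit because the transition maps are injective. Thus `g`
factors through `G i`, where it extends to `R` since `G i` is injective.
-/

universe u

theorem LinearMap.exists_comp_eq_of_range_le {R M N P : Type*} [Semiring R] [AddCommMonoid M]
    [AddCommMonoid N] [AddCommMonoid P] [Module R M] [Module R N] [Module R P]
    {f : N →ₗ[R] P} (hf : Function.Injective f) {g : M →ₗ[R] P} (h : range g ≤ range f) :
    ∃ k : M →ₗ[R] N, f ∘ₗ k = g :=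
  ⟨(LinearEquiv.ofInjective f hf).symm ∘ₗ g.codRestrict (range f) fun x ↦ h ⟨x, rfl⟩, by
    ext x
    simp⟩

namespace Module.DirectLimit

variable {R ι : Type*} [Semiring R] [Preorder ι] [DecidableEq ι] {G : ι → Type*}
  [∀ i, AddCommMonoid (G i)] [∀ i, Module R (G i)] {f : ∀ i j, i ≤ j → G i →ₗ[R] G j}

theorem range_of_mono : Monotone fun i ↦ LinearMap.range (of R ι G f i) := by
  rintro i j hij _ ⟨x, rfl⟩
  exact ⟨f i j hij x, of_f⟩

variable [IsDirectedOrder ι]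

theorem iSup_range_of [Nonempty ι] : ⨆ i, LinearMap.range (of R ι G f i) = ⊤ :=
  eq_top_iff.2 fun z _ ↦
    let ⟨i, x, hx⟩ := exists_of z
    Submodule.mem_iSup_of_mem i ⟨x, hx⟩

theorem exists_le_range_of_fg [Nonempty ι] {N : Submodule R (DirectLimit G f)} (hN : N.FG) :
    ∃ i, N ≤ LinearMap.range (of R ι G f i) := by
  obtain ⟨_, ⟨i, rfl⟩, hi⟩ :=
    (CompleteLattice.isCompactElement_iff_le_of_directed_sSup_le _ N).1
      ((Submodule.fg_iff_compact N).1 hN) _ (Set.range_nonempty _)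
      range_of_mono.directed_le.directedOn_range (by rw [sSup_range, iSup_range_of]; exact le_top)
  exact ⟨i, hi⟩

variable [DirectedSystem G fun i j h ↦ f i j h]

theorem of_injective (hf : ∀ i j h, Function.Injective (f i j h)) (i : ι) :
    Function.Injective (of R ι G f i) := fun _ _ hxy ↦
  let ⟨j, hij, hj⟩ := exists_eq_of_of_eq hxy
  hf i j hij hj

theorem exists_of_comp_eq [Nonempty ι] {M : Type*} [AddCommMonoid M] [Module R M]
    [Module.Finite R M] (hf : ∀ i j h, Function.Injective (f i j h))
    (g : M →ₗ[R] DirectLimit G f) :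
    ∃ i, ∃ h : M →ₗ[R] G i, of R ι G f i ∘ₗ h = g :=
  let ⟨i, hi⟩ := exists_le_range_of_fg (Submodule.fg_range g)
  ⟨i, LinearMap.exists_comp_eq_of_range_le (of_injective hf i) hi⟩

end Module.DirectLimit

/-- Over a left noetherian ring, a direct limit of a directed system of injective modules
with injective transition maps is injective. -/
theorem directLimit_injective_of_noetherian (R : Type u) [Ring R]
    (hR : IsNoetherianRing R)
    (ι : Type u) [Preorder ι] [IsDirected ι (· ≤ ·)] [DecidableEq ι] [Nonempty ι]
    (G : ι → Type u) [∀ i, AddCommGroup (G i)] [∀ i, Module R (G i)]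
    (f : ∀ i j, i ≤ j → G i →ₗ[R] G j)
    [DirectedSystem G fun i j h => f i j h]
    (hinj : ∀ i, Module.Injective R (G i))
    (hmono : ∀ i j (h : i ≤ j), Function.Injective (f i j h)) :
    Module.Injective R (Module.DirectLimit G f) := by
  refine Module.Baer.injective fun I g ↦ ?_
  have := hR
  obtain ⟨i, h, rfl⟩ := Module.DirectLimit.exists_of_comp_eq hmono g
  obtain ⟨h', hh'⟩ := Module.Baer.of_injective (hinj i) I h
  exact ⟨Module.DirectLimit.of R ι G f i ∘ₗ h', fun x hx ↦ by
    rw [LinearMap.comp_apply, LinearMap.comp_apply, hh']⟩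
end

section
/- Let R be a ring and M, N₁, N₂ left R-modules with M a submodule of both N₁ and N₂. Let b̄₁ ∈ N₁^n and b̄₂ ∈ N₂^n be finite tuples. If the quantifier-free types of b̄₁ over M in N₁ and of b̄₂ over M in N₂ (in the language of R-modules) are equal, then there exist a left R-module N and embeddings f₁ : N₁ → N, f₂ : N₂ → N fixing M pointwise such that f₁(b̄₁) = f₂(b̄₂). -/
universe u

/-!
Set `P := M × Rⁿ` and let `gₖ : P → Nₖ` send `(m, r)` to `eₖ m + ∑ rᵢ • bₖ i`. Equality of the
quantifier-free types says exactly that `g₁` and `g₂` have the same kernel, and a pushout of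
modules along two maps with the same kernel is injective on both legs. The pushout of
`N₁ ← P → N₂` then identifies `e₁ m` with `e₂ m` (the image of `(m, 0)`) and `b₁ i` with `b₂ i`
(the image of `(0, Pi.single i 1)`).
-/

namespace LinearMap

variable {R P N₁ N₂ : Type*} [Ring R] [AddCommGroup P] [Module R P]
  [AddCommGroup N₁] [Module R N₁] [AddCommGroup N₂] [Module R N₂]
  (g₁ : P →ₗ[R] N₁) (g₂ : P →ₗ[R] N₂)

def pushoutRel : Submodule R (N₁ × N₂) := range (g₁.prod (-g₂))

abbrev Pushout := (N₁ × N₂) ⧸ pushoutRel g₁ g₂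

def pushoutInl : N₁ →ₗ[R] Pushout g₁ g₂ := (pushoutRel g₁ g₂).mkQ ∘ₗ inl R N₁ N₂

def pushoutInr : N₂ →ₗ[R] Pushout g₁ g₂ := (pushoutRel g₁ g₂).mkQ ∘ₗ inr R N₁ N₂

theorem pushoutInl_comp_eq : pushoutInl g₁ g₂ ∘ₗ g₁ = pushoutInr g₁ g₂ ∘ₗ g₂ := by
  ext p
  refine (Submodule.Quotient.eq _).2 ⟨p, ?_⟩
  simp

theorem pushoutInl_injective (h : ker g₂ ≤ ker g₁) : Function.Injective (pushoutInl g₁ g₂) := by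
  rw [← ker_eq_bot, ker_eq_bot']
  intro x hx
  obtain ⟨p, hp⟩ : (x, (0 : N₂)) ∈ pushoutRel g₁ g₂ := (Submodule.Quotient.mk_eq_zero _).1 hx
  obtain ⟨rfl, hp₂⟩ := Prod.ext_iff.1 hp
  exact h (neg_eq_zero.1 hp₂)

theorem pushoutInr_injective (h : ker g₁ ≤ ker g₂) : Function.Injective (pushoutInr g₁ g₂) := by
  rw [← ker_eq_bot, ker_eq_bot']
  intro y hy
  obtain ⟨p, hp⟩ : ((0 : N₁), y) ∈ pushoutRel g₁ g₂ := (Submodule.Quotient.mk_eq_zero _).1 hy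
  obtain ⟨hp₁, rfl⟩ := Prod.ext_iff.1 hp
  exact neg_eq_zero.2 (h hp₁)

end LinearMap

open LinearMap

section

variable {R M N₁ N₂ : Type*} [Ring R] [AddCommGroup M] [Module R M]
  [AddCommGroup N₁] [Module R N₁] [AddCommGroup N₂] [Module R N₂] {ι : Type*} [Fintype ι]

theorem ker_coprod_linearCombination_le {e₁ : M →ₗ[R] N₁} {e₂ : M →ₗ[R] N₂}
    {b₁ : ι → N₁} {b₂ : ι → N₂}
    (h : ∀ (r : ι → R) (m : M), ∑ i, r i • b₂ i = e₂ m → ∑ i, r i • b₁ i = e₁ m) :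
    ker (e₂.coprod (Fintype.linearCombination R b₂)) ≤
      ker (e₁.coprod (Fintype.linearCombination R b₁)) := by
  rintro ⟨m, r⟩ hmr
  simp only [mem_ker, coprod_apply, Fintype.linearCombination_apply] at hmr ⊢
  rw [add_eq_zero_iff_neg_eq', neg_eq_iff_eq_neg, ← map_neg] at hmr ⊢
  exact h r (-m) hmr

end

theorem qfTypes_amalgamation_general (R : Type u) [Ring R]
    (M N₁ N₂ : Type u) [AddCommGroup M] [Module R M]
    [AddCommGroup N₁] [Module R N₁] [AddCommGroup N₂] [Module R N₂]
    (e₁ : M →ₗ[R] N₁) (e₂ : M →ₗ[R] N₂)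
    (n : ℕ) (b₁ : Fin n → N₁) (b₂ : Fin n → N₂)
    (htp : ∀ (r : Fin n → R) (m : M),
      (∑ i, r i • b₁ i = e₁ m) ↔ (∑ i, r i • b₂ i = e₂ m)) :
    ∃ (N : ModuleCat.{u} R) (f₁ : N₁ →ₗ[R] N) (f₂ : N₂ →ₗ[R] N),
      Function.Injective f₁ ∧ Function.Injective f₂ ∧
      f₁ ∘ₗ e₁ = f₂ ∘ₗ e₂ ∧ ∀ i, f₁ (b₁ i) = f₂ (b₂ i) := by
  set g₁ := e₁.coprod (Fintype.linearCombination R b₁)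
  set g₂ := e₂.coprod (Fintype.linearCombination R b₂)
  have hg := pushoutInl_comp_eq g₁ g₂
  refine ⟨ModuleCat.of R (Pushout g₁ g₂), pushoutInl g₁ g₂, pushoutInr g₁ g₂,
    pushoutInl_injective g₁ g₂ (ker_coprod_linearCombination_le fun r m ↦ (htp r m).2),
    pushoutInr_injective g₁ g₂ (ker_coprod_linearCombination_le fun r m ↦ (htp r m).1), ?_, ?_⟩
  · simpa [g₁, g₂, comp_assoc] using congrArg (· ∘ₗ inl R M (Fin n → R)) hg
  · intro i
    simpa [g₁, g₂] using LinearMap.congr_fun hg (0, Pi.single i 1)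

/-- If two tuples in extensions `N₁`, `N₂` of a common submodule `M` have the same
quantifier-free type over `M` (in the language of left `R`-modules, such types are
determined by the `R`-linear relations among the tuple entries over `M`), then the two
extensions can be amalgamated over `M` identifying the tuples. -/
theorem qfTypes_amalgamation (R : Type u) [Ring R]
    (M N₁ N₂ : Type u) [AddCommGroup M] [Module R M]
    [AddCommGroup N₁] [Module R N₁] [AddCommGroup N₂] [Module R N₂]
    (e₁ : M →ₗ[R] N₁) (e₂ : M →ₗ[R] N₂)
    (he₁ : Function.Injective e₁) (he₂ : Function.Injective e₂)
    (n : ℕ) (b₁ : Fin n → N₁) (b₂ : Fin n → N₂)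
    (htp : ∀ (r : Fin n → R) (m : M),
      (∑ i, r i • b₁ i = e₁ m) ↔ (∑ i, r i • b₂ i = e₂ m)) :
    ∃ (N : ModuleCat.{u} R) (f₁ : N₁ →ₗ[R] N) (f₂ : N₂ →ₗ[R] N),
      Function.Injective f₁ ∧ Function.Injective f₂ ∧
      f₁ ∘ₗ e₁ = f₂ ∘ₗ e₂ ∧ ∀ i, f₁ (b₁ i) = f₂ (b₂ i) :=
  qfTypes_amalgamation_general R M N₁ N₂ e₁ e₂ n b₁ b₂ htp
end

section
/- Let R be a ring and N a left R-module such that N ⊕ N embeds purely into N. Then for all positive primitive formulas φ, ψ in one free variable with ψ → φ valid in all R-modules, the index of ψ(N) in φ(N) is either 1 or infinite. -/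
/-!
The pure embedding `f : N × N → N` restricts to a homomorphism `g : φ(N) × φ(N) → φ(N)`, and by
purity `g⁻¹(ψ(N)) = ψ(N) × ψ(N)`. If `n` is the index of `ψ(N)` in `φ(N)`, the index `n²` of this
preimage divides `n`, so `n = 0` (infinite index) or `n = 1`.
-/
universe u v

/-- A positive primitive formula in one free variable over the ring `R`:
`φ(x) = ∃ y₁ … y_k, ⋀_{i<m} (a i • x + ∑ j, b i j • y j = 0)`. -/
structure PPFormula (R : Type u) where
  m : ℕ
  k : ℕ
  a : Fin m → R
  b : Fin m → Fin k → R

/-- The solution set of a pp-formula in a module, a subgroup of the module. -/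
def PPFormula.sol {R : Type u} [Ring R] (φ : PPFormula R)
    (N : Type v) [AddCommGroup N] [Module R N] : AddSubgroup N where
  carrier := {x | ∃ y : Fin φ.k → N, ∀ i, φ.a i • x + ∑ j, φ.b i j • y j = 0}
  zero_mem' := ⟨0, fun i => by simp⟩
  add_mem' := by
    rintro x₁ x₂ ⟨y, hy⟩ ⟨z, hz⟩
    refine ⟨fun j => y j + z j, fun i => ?_⟩
    have h : φ.a i • (x₁ + x₂) + ∑ j, φ.b i j • (y j + z j)
        = (φ.a i • x₁ + ∑ j, φ.b i j • y j) + (φ.a i • x₂ + ∑ j, φ.b i j • z j) := by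
      simp only [smul_add, Finset.sum_add_distrib]
      abel
    rw [h, hy i, hz i, add_zero]
  neg_mem' := by
    rintro x ⟨y, hy⟩
    refine ⟨fun j => -y j, fun i => ?_⟩
    have h : φ.a i • (-x) + ∑ j, φ.b i j • (-y j)
        = -(φ.a i • x + ∑ j, φ.b i j • y j) := by
      simp only [smul_neg, Finset.sum_neg_distrib]
      abel
    rw [h, hy i, neg_zero]

def IsPureMap (R : Type u) [Ring R] {M N : Type v}
    [AddCommGroup M] [Module R M] [AddCommGroup N] [Module R N]
    (f : M →ₗ[R] N) : Prop :=
  ∀ (m k : ℕ) (a : Fin m → Fin k → R) (b : Fin m → M),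
    (∃ x : Fin k → N, ∀ i, ∑ j, a i j • x j = f (b i)) →
    (∃ x : Fin k → M, ∀ i, ∑ j, a i j • x j = b i)

universe w

theorem AddSubgroup.index_eq_one_or_zero_of_comap_eq_prod {A : Type*} [AddCommGroup A]
    {H : AddSubgroup A} (g : A × A →+ A) (hg : H.comap g = H.prod H) :
    H.index = 1 ∨ H.index = 0 := by
  have hdvd : H.index * H.index ∣ H.index := by
    rw [← AddSubgroup.index_prod, ← hg, AddSubgroup.index_comap]
    exact AddSubgroup.relIndex_dvd_index_of_normal _ _
  rcases Nat.eq_zero_or_pos H.index with h | h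
  · exact Or.inr h
  · have := Nat.le_of_dvd h hdvd
    left
    nlinarith

namespace PPFormula

variable {R : Type u} [Ring R] (φ : PPFormula R)

theorem mem_sol {N : Type v} [AddCommGroup N] [Module R N] {x : N} :
    x ∈ φ.sol N ↔ ∃ y : Fin φ.k → N, ∀ i, φ.a i • x + ∑ j, φ.b i j • y j = 0 :=
  Iff.rfl

theorem sol_prod (M : Type v) (N : Type w) [AddCommGroup M] [Module R M]
    [AddCommGroup N] [Module R N] : φ.sol (M × N) = (φ.sol M).prod (φ.sol N) := by
  ext ⟨x₁, x₂⟩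
  simp only [AddSubgroup.mem_prod, mem_sol]
  constructor
  · rintro ⟨y, hy⟩
    exact ⟨⟨fun j => (y j).1, fun i => by simpa [Prod.fst_sum] using congrArg Prod.fst (hy i)⟩,
      ⟨fun j => (y j).2, fun i => by simpa [Prod.snd_sum] using congrArg Prod.snd (hy i)⟩⟩
  · rintro ⟨⟨y₁, hy₁⟩, ⟨y₂, hy₂⟩⟩
    exact ⟨fun j => (y₁ j, y₂ j), fun i =>
      Prod.ext (by simpa [Prod.fst_sum] using hy₁ i) (by simpa [Prod.snd_sum] using hy₂ i)⟩

variable {M : Type v} {N : Type w} [AddCommGroup M] [Module R M] [AddCommGroup N] [Module R N]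

theorem map_mem_sol (f : M →ₗ[R] N) {x : M} (hx : x ∈ φ.sol M) : f x ∈ φ.sol N := by
  obtain ⟨y, hy⟩ := hx
  refine ⟨fun j => f (y j), fun i => ?_⟩
  simpa [map_sum] using congrArg f (hy i)

end PPFormula

theorem IsPureMap.map_mem_sol_iff {R : Type u} [Ring R] {M N : Type v}
    [AddCommGroup M] [Module R M] [AddCommGroup N] [Module R N] {f : M →ₗ[R] N}
    (hf : IsPureMap R f) (φ : PPFormula R) {x : M} : f x ∈ φ.sol N ↔ x ∈ φ.sol M := by
  refine ⟨fun ⟨y, hy⟩ => ?_, φ.map_mem_sol f⟩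
  obtain ⟨y', hy'⟩ := hf φ.m φ.k φ.b (fun i => -(φ.a i • x))
    ⟨y, fun i => by rw [map_neg, map_smul, eq_neg_iff_add_eq_zero, add_comm, hy i]⟩
  exact ⟨y', fun i => by rw [hy' i, add_neg_cancel]⟩

theorem inv_one_or_infinite_general (R : Type u) [Ring R]
    (N : Type u) [AddCommGroup N] [Module R N]
    (hemb : ∃ f : (N × N) →ₗ[R] N, Function.Injective f ∧ IsPureMap R f)
    (φ ψ : PPFormula R) :
    (ψ.sol N).relIndex (φ.sol N) = 1 ∨ (ψ.sol N).relIndex (φ.sol N) = 0 := by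
  obtain ⟨f, -, hpure⟩ := hemb
  let K := φ.sol N
  let g : K × K →+ K := (f.toAddMonoidHom.comp (K.subtype.prodMap K.subtype)).codRestrict K
    fun x => φ.map_mem_sol f (by rw [φ.sol_prod]; exact ⟨x.1.2, x.2.2⟩)
  refine AddSubgroup.index_eq_one_or_zero_of_comap_eq_prod g ?_
  ext x
  simp only [AddSubgroup.mem_comap, AddSubgroup.mem_prod, AddSubgroup.mem_addSubgroupOf]
  exact (hpure.map_mem_sol_iff ψ).trans (by rw [ψ.sol_prod]; exact Iff.rfl)

/-- If `N ⊕ N` embeds purely into `N`, then for all pp-formulas `φ, ψ` with `ψ → φ`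
valid in all left `R`-modules, the index of `ψ(N)` in `φ(N)` is `1` or infinite
(infinite being recorded as `relindex = 0`). -/
theorem inv_one_or_infinite (R : Type u) [Ring R]
    (N : Type u) [AddCommGroup N] [Module R N]
    (hemb : ∃ f : (N × N) →ₗ[R] N, Function.Injective f ∧ IsPureMap R f)
    (φ ψ : PPFormula R)
    (himp : ∀ (L : Type u) [AddCommGroup L] [Module R L], ψ.sol L ≤ φ.sol L) :
    (ψ.sol N).relIndex (φ.sol N) = 1 ∨ (ψ.sol N).relIndex (φ.sol N) = 0 :=
  inv_one_or_infinite_general R N hemb φ ψ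
end

section
/- Let R be a ring. If there is an infinite cardinal λ ≥ |R| + ℵ₀ such that every left R-module of cardinality at most λ embeds into a fixed injective left R-module U of cardinality λ, then λ^{<γ_R} = λ, where γ_R is the least cardinal such that every left ideal of R is generated by fewer than γ_R elements. -/
/-!
If `κ < γ_R`, some left ideal needs at least `κ` generators, so it contains elements
`f_β` (`β < κ`) with each `f_β` outside the ideal generated by its predecessors. Universality of
`U` yields, for each `β`, `|U|` homomorphisms `Rf_{≤β} → U` that vanish on the earlier `f_α` and
take pairwise different values at `f_β`. Choosing one of them at every stage, and extending through
the injective module `U` (taking directed unions at limit stages), turns each `η : κ → U` into a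
homomorphism `R → U`; two sequences first differing at `β` give homomorphisms differing at `f_β`.
Since `Hom(R, U) ≅ U`, this gives `|U|^κ ≤ |U|`.
-/

open Cardinal Set

universe u

section Generators

variable {R M : Type u} [Ring R] [AddCommGroup M] [Module R M]

theorem Submodule.exists_notMem_span_image_Iio {κ : Cardinal.{u}} (N : Submodule R M)
    (hN : ∀ s : Set M, #s < κ → span R s ≠ N) {k : Type u} [LinearOrder k] [WellFoundedLT k]
    (hk : ∀ β : k, #(Iio β) < κ) : ∃ f : k → M, ∀ β, f β ∉ span R (f '' Iio β) := by
  let next (s : Set M) : M := @Classical.epsilon M ⟨0⟩ fun x => x ∈ N ∧ x ∉ span R s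
  let f : k → M := WellFoundedLT.fix fun β g => next (range fun α : Iio β => g α α.2)
  have hf (β : k) : f β = next (f '' Iio β) := by
    rw [image_eq_range]; exact WellFoundedLT.fix_eq _ β
  suffices ∀ β, f β ∈ N ∧ f β ∉ span R (f '' Iio β) from ⟨f, fun β => (this β).2⟩
  intro β
  induction β using WellFoundedLT.induction with
  | ind β ih =>
    have hle : span R (f '' Iio β) ≤ N := span_le.2 <| image_subset_iff.2 fun α hα => (ih α hα).1
    have hne : span R (f '' Iio β) ≠ N := hN _ (mk_image_le.trans_lt (hk β))
    obtain ⟨x, hxN, hx⟩ := SetLike.exists_of_lt (lt_of_le_of_ne hle hne)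
    rw [hf]
    exact Classical.epsilon_spec (p := fun x => x ∈ N ∧ x ∉ span R _) ⟨x, hxN, hx⟩

end Generators

namespace LinearPMap

variable {R M U : Type u} [Ring R] [AddCommGroup M] [Module R M] [AddCommGroup U] [Module R U]

noncomputable def injectiveExtension [Module.Injective R U] (p : M →ₗ.[R] U) : M →ₗ[R] U :=
  (Module.Injective.extension_property R U _ M _ p.domain.injective_subtype p.toFun).choose

theorem injectiveExtension_apply [Module.Injective R U] (p : M →ₗ.[R] U) (x : p.domain) :
    p.injectiveExtension x = p x :=
  LinearMap.congr_fun
    (Module.Injective.extension_property R U _ M _ p.domain.injective_subtype p.toFun).choose_spec x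

open Classical in
/-- Junk value `⊥` on non-directed sets; it is only applied to chains. -/
noncomputable def directedSup (s : Set (M →ₗ.[R] U)) : M →ₗ.[R] U :=
  if hs : DirectedOn (· ≤ ·) s then LinearPMap.sSup s hs else ⊥

theorem le_directedSup {s : Set (M →ₗ.[R] U)} (hs : DirectedOn (· ≤ ·) s) {p : M →ₗ.[R] U}
    (hp : p ∈ s) : p ≤ directedSup s := by
  rw [directedSup, dif_pos hs]
  exact LinearPMap.le_sSup hs hp

theorem injectiveExtension_directedSup_apply [Module.Injective R U] {s : Set (M →ₗ.[R] U)}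
    (hs : DirectedOn (· ≤ ·) s) {p : M →ₗ.[R] U} (hp : p ∈ s) (x : p.domain) :
    (directedSup s).injectiveExtension x = p x := by
  have hle := le_directedSup hs hp
  rw [hle.2 (y := ⟨x, hle.1 x.2⟩) rfl]
  exact injectiveExtension_apply _ ⟨(x : M), hle.1 x.2⟩

end LinearPMap

section TransfiniteExtension

open LinearPMap

variable {R M U : Type u} [Ring R] [AddCommGroup M] [Module R M] [AddCommGroup U] [Module R U]
  [Module.Injective R U] {k : Type*} [LinearOrder k] [WellFoundedLT k]
  (D : k → Submodule R M) (h : ∀ β, D β →ₗ[R] U)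

noncomputable def transfiniteExtension : k → M →ₗ[R] U :=
  WellFoundedLT.fix fun β E => injectiveExtension <| directedSup <|
    range fun α : Iio β => (⟨D α, (E α α.2).domRestrict (D α) + h α⟩ : M →ₗ.[R] U)

noncomputable def transfiniteStage (β : k) : M →ₗ.[R] U :=
  ⟨D β, (transfiniteExtension D h β).domRestrict (D β) + h β⟩

noncomputable def transfiniteLimit : M →ₗ[R] U :=
  injectiveExtension <| directedSup <| range (transfiniteStage D h)

theorem transfiniteExtension_eq (β : k) : transfiniteExtension D h β =
    injectiveExtension (directedSup (transfiniteStage D h '' Iio β)) := by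
  rw [image_eq_range]; exact WellFoundedLT.fix_eq _ β

theorem transfiniteExtension_congr {h h' : ∀ β, D β →ₗ[R] U} (β : k)
    (hh : ∀ α < β, h α = h' α) : transfiniteExtension D h β = transfiniteExtension D h' β := by
  induction β using WellFoundedLT.induction with
  | ind β ih =>
    rw [transfiniteExtension_eq, transfiniteExtension_eq]
    congr 2
    refine image_congr fun α hα => ?_
    rw [transfiniteStage, transfiniteStage, ih α hα fun γ hγ => hh γ (hγ.trans hα), hh α hα]

variable {D h}

theorem monotone_transfiniteStage (hD : Monotone D)
    (hh : ∀ α β, α < β → ∀ x : D β, (x : M) ∈ D α → h β x = 0) :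
    Monotone (transfiniteStage D h) := by
  refine monotone_iff_forall_lt.2 fun α β hαβ => ?_
  induction β using WellFoundedLT.induction generalizing α with
  | ind β ih =>
    have hdir : DirectedOn (· ≤ ·) (transfiniteStage D h '' Iio β) := by
      refine image_eq_range _ _ ▸ directedOn_range.2 (Monotone.directed_le fun a b hab => ?_)
      rcases hab.lt_or_eq with hab | hab
      · exact ih b b.2 a hab
      · rw [hab]
    refine ⟨hD hαβ.le, fun x y hxy => ?_⟩
    change _ = transfiniteExtension D h β y + h β y
    rw [hh α β hαβ y (hxy ▸ x.2), add_zero, transfiniteExtension_eq, ← hxy]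
    exact (injectiveExtension_directedSup_apply hdir (mem_image_of_mem _ hαβ) x).symm

theorem transfiniteLimit_apply (hD : Monotone D)
    (hh : ∀ α β, α < β → ∀ x : D β, (x : M) ∈ D α → h β x = 0) {β : k} (x : D β) :
    transfiniteLimit D h x = transfiniteExtension D h β x + h β x :=
  injectiveExtension_directedSup_apply
    (directedOn_range.2 (monotone_transfiniteStage hD hh).directed_le) (mem_range_self β) x

theorem injective_transfiniteLimit {ι : Type*} (hD : Monotone D) (g : ∀ β, ι → D β →ₗ[R] U)
    (hg : ∀ α β, α < β → ∀ i, ∀ x : D β, (x : M) ∈ D α → g β i x = 0)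
    (x : ∀ β, D β) (hx : ∀ β, Function.Injective fun i => g β i (x β)) :
    Function.Injective fun η : k → ι => transfiniteLimit D fun β => g β (η β) := by
  intro η η' hηη'
  by_contra hne
  obtain ⟨β, hβ, hmin⟩ := wellFounded_lt.has_min {β | η β ≠ η' β} (Function.ne_iff.1 hne)
  have hbelow : ∀ α < β, g α (η α) = g α (η' α) := fun α hα =>
    congrArg (g α) (not_not.1 fun h => hmin α h hα)
  have hval := LinearMap.congr_fun hηη' (x β)
  rw [transfiniteLimit_apply hD (hg · · · _), transfiniteLimit_apply hD (hg · · · _),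
    transfiniteExtension_congr D β hbelow] at hval
  exact hβ (hx β (add_left_cancel hval))

end TransfiniteExtension

section Universal

variable {R U : Type u} [Ring R] [AddCommGroup U] [Module R U]

theorem exists_injective_apply_of_universal [Infinite U]
    (huniv : ∀ (Q : Type u) [AddCommGroup Q] [Module R Q],
      #Q ≤ #U → ∃ f : Q →ₗ[R] U, Function.Injective f)
    {M : Type u} [AddCommGroup M] [Module R M] (N L : Submodule R M) (hN : #N ≤ #U) {x : M}
    (hxN : x ∈ N) (hxL : x ∉ L) : ∃ g : U → N →ₗ[R] U,
      (∀ u, ∀ y : N, (y : M) ∈ L → g u y = 0) ∧ Function.Injective fun u => g u ⟨x, hxN⟩ := by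
  let P := L.comap N.subtype
  have hx : P.mkQ ⟨x, hxN⟩ ≠ 0 := by simpa [P] using hxL
  have : Nontrivial (N ⧸ P) := nontrivial_of_ne _ _ hx
  obtain ⟨e, he⟩ := huniv (U →₀ N ⧸ P) <| by
    rw [mk_finsupp_of_infinite]
    exact max_le le_rfl ((mk_le_of_surjective P.mkQ_surjective).trans hN)
  refine ⟨fun u => e ∘ₗ Finsupp.lsingle u ∘ₗ P.mkQ, fun u y hy => ?_,
    fun u v huv => Finsupp.single_left_injective hx (he huv)⟩
  simp [(Submodule.Quotient.mk_eq_zero P).2 hy]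

theorem one_lt_of_forall_exists_span_eq [Nontrivial R] {γ : Cardinal.{u}}
    (hγ : ∀ I : Ideal R, ∃ s : Set R, #s < γ ∧ Ideal.span s = I) : 1 < γ := by
  obtain ⟨s, hs, hspan⟩ := hγ ⊤
  have : s.Nonempty := nonempty_iff_ne_empty.2 (by rintro rfl; simp at hspan)
  exact (Cardinal.one_le_iff_ne_zero.2 (mk_ne_zero_iff.2 this.to_subtype)).trans_lt hs

theorem power_le_of_universal [Module.Injective R U] [Infinite U] (hR : #R ≤ #U)
    (huniv : ∀ (Q : Type u) [AddCommGroup Q] [Module R Q],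
      #Q ≤ #U → ∃ f : Q →ₗ[R] U, Function.Injective f)
    {κ : Cardinal.{u}} (I : Ideal R) (hI : ∀ s : Set R, #s < κ → Ideal.span s ≠ I) :
    #U ^ κ ≤ #U := by
  obtain ⟨f, hf⟩ := I.exists_notMem_span_image_Iio hI fun β : κ.ord.ToType => by
    simpa using mk_Iio_lt β
  let D (β : κ.ord.ToType) : Ideal R := Ideal.span (f '' Iic β)
  have hD : Monotone D := fun α β hαβ => Ideal.span_mono (image_mono (Iic_subset_Iic.2 hαβ))
  have hfD (β) : f β ∈ D β := Ideal.subset_span (mem_image_of_mem f self_mem_Iic)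
  choose g hg hg_inj using fun β => exists_injective_apply_of_universal huniv (D β)
    (Ideal.span (f '' Iio β)) ((mk_subtype_le _).trans hR) (hfD β) (hf β)
  have hDlt {α β} (hαβ : α < β) : D α ≤ Ideal.span (f '' Iio β) :=
    Ideal.span_mono (image_mono (Iic_subset_Iio.2 hαβ))
  have hinj := injective_transfiniteLimit hD g (fun α β hαβ i x hx => hg β i x (hDlt hαβ hx))
    (fun β => ⟨f β, hfD β⟩) hg_inj
  calc #U ^ κ = #(κ.ord.ToType → U) := by rw [← power_def, mk_ord_toType]
    _ ≤ #(R →ₗ[R] U) := mk_le_of_injective hinj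
    _ = #U := (LinearMap.ringLmapEquivSelf R ℕ U).toEquiv.cardinal_eq

end Universal

/-- Eklof: if there is an injective module `U` of cardinality `c ≥ |R| + ℵ₀` into which
every module of cardinality at most `c` embeds, then `c ^< γ_R = c`, where `γ_R` is the
least cardinal such that every left ideal of `R` is generated by fewer than `γ_R`
elements. -/
theorem eklof_powerlt (R : Type u) [Ring R] (c : Cardinal.{u}) (hc : #R + ℵ₀ ≤ c)
    (U : Type u) [AddCommGroup U] [Module R U]
    (hU : Module.Injective R U) (hcU : #U = c)
    (huniv : ∀ (M : Type u) [AddCommGroup M] [Module R M],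
      #M ≤ c → ∃ f : M →ₗ[R] U, Function.Injective f) :
    c ^< (sInf {γ : Cardinal.{u} |
      ∀ I : Ideal R, ∃ s : Set R, #s < γ ∧ Ideal.span s = I}) = c := by
  subst hcU
  have : Infinite U := infinite_iff.2 ((le_add_left le_rfl).trans hc)
  have : Nontrivial R := Module.nontrivial R U
  set S := {γ : Cardinal.{u} | ∀ I : Ideal R, ∃ s : Set R, #s < γ ∧ Ideal.span s = I}
  have hγ : sInf S ∈ S := csInf_mem
    ⟨Order.succ #R, fun I => ⟨I, (mk_set_le _).trans_lt (Order.lt_succ _), I.span_eq⟩⟩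
  refine le_antisymm (powerlt_le.2 fun κ hκ => ?_)
    (by simpa using le_powerlt #U (one_lt_of_forall_exists_span_eq hγ))
  obtain ⟨I, hI⟩ : ∃ I : Ideal R, ∀ s : Set R, #s < κ → Ideal.span s ≠ I := by
    simpa [S] using notMem_of_lt_csInf' hκ
  exact power_le_of_universal ((le_add_right le_rfl).trans hc) huniv I hI
end
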